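/- Let G be a finite group with regular character χ_reg, and let n be a positive divisor of exp(G). Then ∑_{ρ ⊆ π(n)} (−1)^{|ρ|} ⟨Ψ^{n(ρ)}(χ_reg), 1_G⟩ = |{g ∈ G : n ∣ o(g)}|, the number of elements of G whose order is a multiple of n. In particular this quantity is positive if and only if G has an element of order n. -/

import Mathlib

/-!
For `m ∣ N`, `m ∣ nrho N n ρ` holds exactly when `v_q(m) < v_q(n)` for every `q ∈ ρ`.
Averaging the regular character over `g ↦ g ^ k` counts the `g` with `orderOf g ∣ k`, so after
exchanging sums the left-hand side is, for each `g`, an inclusion–exclusion sum over the primes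
`q ∣ n` which collapses to the indicator of `v_q(n) ≤ v_q(orderOf g)` for all such `q`, that is,
of `n ∣ orderOf g`. Such a `g` yields `g ^ (orderOf g / n)`, of order exactly `n`.
-/
/-- `nrho N n ρ` is the integer with `q`-adic valuation `v_q(n) - 1` for `q ∈ ρ`
and `v_q(N)` for primes `q ∉ ρ`. -/
def nrho (N n : ℕ) (ρ : Finset ℕ) : ℕ :=
  ∏ p ∈ N.primeFactors, p ^ (if p ∈ ρ then n.factorization p - 1 else N.factorization p)

/-- The character of the regular representation of `G`. -/
noncomputable def regChar (G : Type) [Group G] [Fintype G] [DecidableEq G] (g : G) : ℂ :=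
  if g = 1 then (Fintype.card G : ℂ) else 0

namespace Finset

theorem sum_powerset_neg_one_pow_card_mul_boole {ι R : Type*} [CommRing R]
    (s : Finset ι) (p : ι → Prop) [DecidablePred p] :
    ∑ t ∈ s.powerset, (-1 : R) ^ t.card * (if ∀ i ∈ t, ¬ p i then 1 else 0) =
      if ∀ i ∈ s, p i then 1 else 0 := by
  classical
  have hsplit : ∀ i, (if p i then (1 : R) else 0) = -(if ¬ p i then 1 else 0) + 1 := by
    intro i
    split_ifs <;> simp_all
  rw [← prod_boole, prod_congr rfl fun i _ => hsplit i, prod_add]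
  refine sum_congr rfl fun t _ => ?_
  rw [prod_const_one, mul_one, prod_neg, prod_boole]

end Finset

section nrho

variable {N n m : ℕ} {ρ : Finset ℕ}

theorem nrho_ne_zero (N n : ℕ) (ρ : Finset ℕ) : nrho N n ρ ≠ 0 :=
  Finset.prod_ne_zero_iff.mpr fun _ hp => pow_ne_zero _ (Nat.prime_of_mem_primeFactors hp).ne_zero

theorem factorization_nrho (hρ : ρ ⊆ N.primeFactors) (q : ℕ) :
    (nrho N n ρ).factorization q = if q ∈ ρ then n.factorization q - 1 else N.factorization q := by
  unfold nrho
  rw [Nat.factorization_prod fun _ hp => pow_ne_zero _ (Nat.prime_of_mem_primeFactors hp).ne_zero,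
    Finset.sum_apply', Finset.sum_congr rfl fun _ hp => by
    rw [(Nat.prime_of_mem_primeFactors hp).factorization_pow, Finsupp.single_apply],
    Finset.sum_ite_eq']
  split_ifs with hqN hqρ hqρ
  · rfl
  · rfl
  · exact absurd (hρ hqρ) hqN
  · exact (Finsupp.notMem_support_iff.mp (by rwa [Nat.support_factorization])).symm

theorem dvd_nrho_iff (hN : N ≠ 0) (hn : n ∣ N) (hm : m ∣ N) (hρ : ρ ⊆ n.primeFactors) :
    m ∣ nrho N n ρ ↔ ∀ q ∈ ρ, m.factorization q < n.factorization q := by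
  have hρN : ρ ⊆ N.primeFactors := hρ.trans (Nat.primeFactors_mono hn hN)
  have hmN : m.factorization ≤ N.factorization := (Nat.factorization_le_iff_dvd
    (ne_zero_of_dvd_ne_zero hN hm) hN).mpr hm
  have hn_pos : ∀ q ∈ ρ, 0 < n.factorization q := fun q hq =>
    Nat.pos_of_ne_zero (Finsupp.mem_support_iff.mp (by rw [Nat.support_factorization]; exact hρ hq))
  rw [← Nat.factorization_le_iff_dvd (ne_zero_of_dvd_ne_zero hN hm) (nrho_ne_zero N n ρ),
    Finsupp.le_def]
  simp_rw [factorization_nrho hρN]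
  constructor
  · intro h q hq
    have := h q
    rw [if_pos hq] at this
    have := hn_pos q hq
    omega
  · intro h q
    split_ifs with hq
    · have := h q hq
      omega
    · exact hmN q

theorem sum_powerset_neg_one_pow_card_mul_dvd_nrho (hN : N ≠ 0) (hn : n ∣ N) (hm : m ∣ N) :
    ∑ ρ ∈ n.primeFactors.powerset, (-1 : ℂ) ^ ρ.card * (if m ∣ nrho N n ρ then 1 else 0) =
      if n ∣ m then 1 else 0 := by
  have hn_dvd : n ∣ m ↔ ∀ q ∈ n.primeFactors, ¬ m.factorization q < n.factorization q := by
    simp_rw [not_lt, ← Nat.factorization_le_iff_dvd (ne_zero_of_dvd_ne_zero hN hn)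
      (ne_zero_of_dvd_ne_zero hN hm),
      Finsupp.le_iff, Nat.support_factorization]
  rw [if_congr hn_dvd rfl rfl, ← Finset.sum_powerset_neg_one_pow_card_mul_boole]
  refine Finset.sum_congr rfl fun ρ hρ => ?_
  simp_rw [not_not]
  rw [if_congr (dvd_nrho_iff hN hn hm (Finset.mem_powerset.mp hρ)) rfl rfl]

end nrho

theorem inv_card_mul_sum_regChar_pow (G : Type) [Group G] [Fintype G] [DecidableEq G] (k : ℕ) :
    (Fintype.card G : ℂ)⁻¹ * ∑ g : G, regChar G (g ^ k) =
      ∑ g : G, if orderOf g ∣ k then 1 else 0 := by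
  have hcard : (Fintype.card G : ℂ) ≠ 0 := Nat.cast_ne_zero.mpr Fintype.card_ne_zero
  have hterm : ∀ g : G, regChar G (g ^ k) = Fintype.card G * if orderOf g ∣ k then 1 else 0 := by
    intro g
    rw [regChar, mul_boole]
    exact if_congr orderOf_dvd_iff_pow_eq_one.symm rfl rfl
  simp_rw [hterm, ← Finset.mul_sum, inv_mul_cancel_left₀ hcard]

theorem exists_dvd_orderOf_iff_exists_orderOf_eq {G : Type*} [Group G] [Finite G] (n : ℕ) :
    (∃ g : G, n ∣ orderOf g) ↔ ∃ g : G, orderOf g = n :=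
  ⟨fun ⟨g, hg⟩ => ⟨g ^ (orderOf g / n), orderOf_pow_orderOf_div (orderOf_pos g).ne' hg⟩,
    fun ⟨g, hg⟩ => ⟨g, hg.symm.dvd⟩⟩

theorem stmt_15_general (G : Type) [Group G] [Fintype G] [DecidableEq G]
    (n : ℕ) (hn : n ∣ Monoid.exponent G) :
    (∑ ρ ∈ n.primeFactors.powerset, (-1 : ℂ) ^ ρ.card *
        ((Fintype.card G : ℂ)⁻¹ *
          ∑ g : G, regChar G (g ^ nrho (Monoid.exponent G) n ρ))) =
      ((Finset.univ.filter (fun g : G => n ∣ orderOf g)).card : ℂ) ∧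
    (0 < (Finset.univ.filter (fun g : G => n ∣ orderOf g)).card ↔
      ∃ g : G, orderOf g = n) := by
  refine ⟨?_, ?_⟩
  · simp_rw [inv_card_mul_sum_regChar_pow, Finset.mul_sum]
    rw [Finset.sum_comm, ← Finset.sum_boole]
    exact Finset.sum_congr rfl fun g _ => sum_powerset_neg_one_pow_card_mul_dvd_nrho
      Monoid.exponent_ne_zero_of_finite hn (Monoid.order_dvd_exponent g)
  · simp [Finset.card_pos, Finset.filter_nonempty_iff, exists_dvd_orderOf_iff_exists_orderOf_eq]

theorem stmt_15 (G : Type) [Group G] [Fintype G] [DecidableEq G]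
    (n : ℕ) (hn0 : 0 < n) (hn : n ∣ Monoid.exponent G) :
    (∑ ρ ∈ n.primeFactors.powerset, (-1 : ℂ) ^ ρ.card *
        ((Fintype.card G : ℂ)⁻¹ *
          ∑ g : G, regChar G (g ^ nrho (Monoid.exponent G) n ρ))) =
      ((Finset.univ.filter (fun g : G => n ∣ orderOf g)).card : ℂ) ∧
    (0 < (Finset.univ.filter (fun g : G => n ∣ orderOf g)).card ↔
      ∃ g : G, orderOf g = n) :=
  stmt_15_general G n hn
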